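/- Let D ≠ 0 be a coalgebra over a field K, I a set, C = ⊕_{i∈I} D the direct sum coalgebra, and λ : C → D the codiagonal morphism λ(σ_i(d)) = d. Suppose there exist a D-bicomodule morphism α : D → C and a C-bicomodule morphism β : C □_D C → C satisfying β(Σ αλ(c₁)⊗c₂) = c for all c ∈ C. Then I is finite. -/

import Mathlib

open TensorProduct LinearMap

set_option synthInstance.maxHeartbeats 1000000
set_option maxHeartbeats 1000000

/-- The comultiplication of the direct sum coalgebra `C = ⊕_{i∈I} D`. -/
noncomputable def dsDelta {K D : Type*} (ι : Type*) [Field K] [AddCommGroup D]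
    [Module K D] (ΔD : D →ₗ[K] D ⊗[K] D) :
    (ι →₀ D) →ₗ[K] (ι →₀ D) ⊗[K] (ι →₀ D) :=
  Finsupp.lsum K fun i =>
    TensorProduct.map (Finsupp.lsingle i) (Finsupp.lsingle i) ∘ₗ ΔD

/-- The counit of the direct sum coalgebra. -/
noncomputable def dsCounit {K D : Type*} (ι : Type*) [Field K] [AddCommGroup D]
    [Module K D] (εD : D →ₗ[K] K) : (ι →₀ D) →ₗ[K] K :=
  Finsupp.lsum K fun _ => εD

/-- The codiagonal map `λ : ⊕_{i∈I} D → D`. -/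
noncomputable def dsLam {K D : Type*} (ι : Type*) [Field K] [AddCommGroup D]
    [Module K D] : (ι →₀ D) →ₗ[K] D :=
  Finsupp.lsum K fun _ => (LinearMap.id : D →ₗ[K] D)

section Aux
variable {K D : Type*} {ι : Type*} [Field K] [AddCommGroup D] [Module K D]

lemma dsDelta_single (ΔD : D →ₗ[K] D ⊗[K] D) (i : ι) (d : D) :
    dsDelta ι ΔD (Finsupp.single i d)
      = TensorProduct.map (Finsupp.lsingle i) (Finsupp.lsingle i) (ΔD d) := by
  simp [dsDelta]

lemma dsDelta_comp_lsingle (ΔD : D →ₗ[K] D ⊗[K] D) (i : ι) :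
    dsDelta ι ΔD ∘ₗ Finsupp.lsingle i
      = TensorProduct.map (Finsupp.lsingle i) (Finsupp.lsingle i) ∘ₗ ΔD := by
  ext d
  simp [dsDelta]

lemma dsLam_comp_lsingle (i : ι) :
    dsLam ι ∘ₗ (Finsupp.lsingle i : D →ₗ[K] ι →₀ D) = LinearMap.id := by
  ext d; simp [dsLam]

lemma lapply_comp_lsingle_same (i : ι) :
    (Finsupp.lapply i : (ι →₀ D) →ₗ[K] D) ∘ₗ Finsupp.lsingle i = LinearMap.id := by
  ext d; simp

lemma lapply_comp_lsingle_ne {i j : ι} (h : ¬ j = i) :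
    (Finsupp.lapply i : (ι →₀ D) →ₗ[K] D) ∘ₗ Finsupp.lsingle j = 0 := by
  ext d; simp [Finsupp.single_apply, h]

lemma proj_dsDelta (ΔD : D →ₗ[K] D ⊗[K] D) (i : ι) :
    TensorProduct.map (Finsupp.lapply i) (dsLam ι) ∘ₗ dsDelta ι ΔD
      = ΔD ∘ₗ (Finsupp.lapply i : (ι →₀ D) →ₗ[K] D) := by
  apply Finsupp.lhom_ext'
  intro j
  rw [comp_assoc, comp_assoc, dsDelta_comp_lsingle, ← comp_assoc _ _ (TensorProduct.map _ _),
    ← TensorProduct.map_comp]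
  by_cases h : j = i
  · subst h
    rw [lapply_comp_lsingle_same, dsLam_comp_lsingle, TensorProduct.map_id, id_comp, comp_id]
  · rw [lapply_comp_lsingle_ne h, TensorProduct.map_zero_left, zero_comp, comp_zero]

lemma phi_beta {C : Type*} [AddCommGroup C] [Module K C] (h : C →ₗ[K] K)
    (β : C ⊗[K] C →ₗ[K] C) :
    (TensorProduct.lid K C).toLinearMap ∘ₗ TensorProduct.map h β
        ∘ₗ (TensorProduct.assoc K C C C).toLinearMap
      = β ∘ₗ rTensor C ((TensorProduct.lid K C).toLinearMap ∘ₗ rTensor C h) := by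
  apply TensorProduct.ext_threefold
  intro a b c
  simp only [coe_comp, LinearEquiv.coe_coe, Function.comp_apply, assoc_tmul, map_tmul,
    lid_tmul, rTensor_tmul]
  rw [← TensorProduct.smul_tmul', map_smul]

lemma lid_map_single (εD : D →ₗ[K] K) (i : ι) :
    (TensorProduct.lid K (ι →₀ D)).toLinearMap
        ∘ₗ TensorProduct.map εD (Finsupp.lsingle i)
      = Finsupp.lsingle i ∘ₗ (TensorProduct.lid K D).toLinearMap ∘ₗ rTensor D εD := by
  apply TensorProduct.ext'
  intro a b
  simp [Finsupp.smul_single]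

lemma g_eq (ΔD : D →ₗ[K] D ⊗[K] D) (εD : D →ₗ[K] K)
    (hclD : (TensorProduct.lid K D).toLinearMap ∘ₗ rTensor D εD ∘ₗ ΔD = LinearMap.id)
    (i : ι) :
    (TensorProduct.lid K (ι →₀ D)).toLinearMap
        ∘ₗ rTensor (ι →₀ D) (εD ∘ₗ Finsupp.lapply i) ∘ₗ dsDelta ι ΔD
      = Finsupp.lsingle i ∘ₗ Finsupp.lapply i := by
  apply Finsupp.lhom_ext
  intro j d
  simp only [comp_apply, dsDelta_single, Finsupp.lapply_apply]
  rw [← comp_apply (rTensor _ _) (TensorProduct.map _ _), rTensor_comp_map, comp_assoc]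
  by_cases h : j = i
  · subst h
    rw [lapply_comp_lsingle_same, comp_id,
      ← comp_apply (TensorProduct.lid K (ι →₀ D)).toLinearMap, lid_map_single]
    have h2 := LinearMap.congr_fun hclD d
    simp only [comp_apply, LinearEquiv.coe_coe, id_apply] at h2 ⊢
    rw [h2]
    simp
  · rw [lapply_comp_lsingle_ne h, comp_zero, TensorProduct.map_zero_left]
    simp [Finsupp.single_apply, h]

end Aux

/-- let `D ≠ 0` be a coalgebra, `C = ⊕_{i∈I} D` the direct sum
coalgebra and `λ : C → D` the codiagonal morphism. If there are a `D`-bicomodule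
morphism `α : D → C` and a `C`-bicomodule morphism `β : C □_D C → C` with
`β(Σ αλ(c₁)⊗c₂) = c` for all `c ∈ C`, then `I` is finite. -/
theorem stmt15 {K D ι : Type*} [Field K] [AddCommGroup D] [Module K D]
    [Nontrivial D]
    (ΔD : D →ₗ[K] D ⊗[K] D) (εD : D →ₗ[K] K)
    (hcoD : (TensorProduct.assoc K D D D).toLinearMap ∘ₗ rTensor D ΔD ∘ₗ ΔD
      = lTensor D ΔD ∘ₗ ΔD)
    (hclD : (TensorProduct.lid K D).toLinearMap ∘ₗ rTensor D εD ∘ₗ ΔD = LinearMap.id)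
    (hcrD : (TensorProduct.rid K D).toLinearMap ∘ₗ lTensor D εD ∘ₗ ΔD = LinearMap.id)
    -- `α : D → C = ι →₀ D` is a morphism of `D`-bicomodules:
    (α : D →ₗ[K] (ι →₀ D))
    (hαr : (lTensor (ι →₀ D) (dsLam ι) ∘ₗ dsDelta ι ΔD) ∘ₗ α = rTensor D α ∘ₗ ΔD)
    (hαl : (rTensor (ι →₀ D) (dsLam ι) ∘ₗ dsDelta ι ΔD) ∘ₗ α = lTensor D α ∘ₗ ΔD)
    -- `β : C □_D C → C` is a morphism of `C`-bicomodules: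
    (β : (ι →₀ D) ⊗[K] (ι →₀ D) →ₗ[K] (ι →₀ D))
    (hβl : ∀ x : (ι →₀ D) ⊗[K] (ι →₀ D),
      ((TensorProduct.assoc K (ι →₀ D) D (ι →₀ D)).toLinearMap
          ∘ₗ rTensor (ι →₀ D) (lTensor (ι →₀ D) (dsLam ι) ∘ₗ dsDelta ι ΔD)) x
        = (lTensor (ι →₀ D) (rTensor (ι →₀ D) (dsLam ι) ∘ₗ dsDelta ι ΔD)) x →
      dsDelta ι ΔD (β x) = (lTensor (ι →₀ D) β)
        ((TensorProduct.assoc K (ι →₀ D) (ι →₀ D) (ι →₀ D))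
          ((rTensor (ι →₀ D) (dsDelta ι ΔD)) x)))
    (hβr : ∀ x : (ι →₀ D) ⊗[K] (ι →₀ D),
      ((TensorProduct.assoc K (ι →₀ D) D (ι →₀ D)).toLinearMap
          ∘ₗ rTensor (ι →₀ D) (lTensor (ι →₀ D) (dsLam ι) ∘ₗ dsDelta ι ΔD)) x
        = (lTensor (ι →₀ D) (rTensor (ι →₀ D) (dsLam ι) ∘ₗ dsDelta ι ΔD)) x →
      dsDelta ι ΔD (β x) = (rTensor (ι →₀ D) β)
        ((TensorProduct.assoc K (ι →₀ D) (ι →₀ D) (ι →₀ D)).symm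
          ((lTensor (ι →₀ D) (dsDelta ι ΔD)) x)))
    -- `β(Σ αλ(c₁) ⊗ c₂) = c`:
    (hβα : ∀ c : ι →₀ D,
      β ((rTensor (ι →₀ D) (α ∘ₗ dsLam ι)) (dsDelta ι ΔD c)) = c) :
    Finite ι := by
  classical
  have key : ∀ (i : ι) (d : D), Finsupp.single i d
      = β (TensorProduct.map (Finsupp.lsingle i) (Finsupp.lsingle i) (ΔD (α d i))) := by
    intro i d
    -- componentwise right colinearity of α
    have hcomp : ∀ e : D, ΔD (α e i)
        = rTensor D (Finsupp.lapply i ∘ₗ α) (ΔD e) := by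
      intro e
      have h1 := LinearMap.congr_fun (proj_dsDelta ΔD i) (α e)
      simp only [comp_apply, Finsupp.lapply_apply] at h1
      have h3 : (TensorProduct.map (Finsupp.lapply i) (dsLam ι) :
            ((ι →₀ D) ⊗[K] (ι →₀ D)) →ₗ[K] D ⊗[K] D)
          = rTensor D (Finsupp.lapply i) ∘ₗ lTensor (ι →₀ D) (dsLam ι) :=
        by rw [rTensor_comp_lTensor]
      rw [← h1, h3, comp_apply]
      have h2 := LinearMap.congr_fun hαr e
      simp only [comp_apply] at h2
      rw [h2, rTensor_comp, comp_apply]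
    -- the element x = Σ α(d₁) ⊗ σ_i(d₂)
    have hβx : β (TensorProduct.map α (Finsupp.lsingle i) (ΔD d))
        = Finsupp.single i d := by
      have h0 := hβα (Finsupp.single i d)
      rw [dsDelta_single,
        ← comp_apply (rTensor _ _) (TensorProduct.map _ _), rTensor_comp_map,
        comp_assoc, dsLam_comp_lsingle, comp_id] at h0
      exact h0
    -- x satisfies the cotensor-product condition
    have hcond : ((TensorProduct.assoc K (ι →₀ D) D (ι →₀ D)).toLinearMap
          ∘ₗ rTensor (ι →₀ D) (lTensor (ι →₀ D) (dsLam ι) ∘ₗ dsDelta ι ΔD))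
            (TensorProduct.map α (Finsupp.lsingle i) (ΔD d))
        = (lTensor (ι →₀ D) (rTensor (ι →₀ D) (dsLam ι) ∘ₗ dsDelta ι ΔD))
            (TensorProduct.map α (Finsupp.lsingle i) (ΔD d)) := by
      simp only [comp_apply, LinearEquiv.coe_coe]
      rw [← comp_apply (rTensor _ _) (TensorProduct.map _ _), rTensor_comp_map, hαr,
        ← map_comp_rTensor, comp_apply,
        show (rTensor D α : D ⊗[K] D →ₗ[K] _) = TensorProduct.map α LinearMap.id from rfl,
        ← TensorProduct.map_map_assoc]
      have hco := LinearMap.congr_fun hcoD d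
      simp only [comp_apply, LinearEquiv.coe_coe] at hco
      rw [hco, ← comp_apply (TensorProduct.map α _) (lTensor _ _), map_comp_lTensor,
        ← comp_apply (lTensor _ _) (TensorProduct.map _ _), lTensor_comp_map,
        comp_assoc (Finsupp.lsingle i) (dsDelta ι ΔD) (rTensor _ (dsLam ι)),
        dsDelta_comp_lsingle, ← comp_assoc _ (TensorProduct.map _ _) (rTensor _ _),
        rTensor_comp_map, dsLam_comp_lsingle]
    -- the left colinearity of β applied to x
    have hmain := hβl (TensorProduct.map α (Finsupp.lsingle i) (ΔD d)) hcond
    rw [hβx, dsDelta_single] at hmain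
    -- apply φ = (ε ∘ p_i ⊗ id) to both sides of hmain
    have hφ := congrArg (fun y => (TensorProduct.lid K (ι →₀ D))
      (rTensor (ι →₀ D) (εD ∘ₗ Finsupp.lapply i) y)) hmain
    -- simplify the left-hand side of hφ
    rw [← comp_apply (rTensor _ _) (TensorProduct.map _ _), rTensor_comp_map,
      comp_assoc _ _ εD, lapply_comp_lsingle_same, comp_id] at hφ
    rw [show (TensorProduct.lid K (ι →₀ D)) (TensorProduct.map εD (Finsupp.lsingle i) (ΔD d))
        = ((TensorProduct.lid K (ι →₀ D)).toLinearMap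
            ∘ₗ TensorProduct.map εD (Finsupp.lsingle i)) (ΔD d) from rfl,
      lid_map_single] at hφ
    have hcl := LinearMap.congr_fun hclD d
    simp only [comp_apply, LinearEquiv.coe_coe, id_apply, Finsupp.lsingle_apply] at hφ hcl
    rw [hcl] at hφ
    -- simplify the right-hand side of hφ
    rw [← comp_apply (rTensor _ (εD ∘ₗ _)) (lTensor _ β), rTensor_comp_lTensor] at hφ
    have hpb := LinearMap.congr_fun (phi_beta (εD ∘ₗ Finsupp.lapply i) β)
      ((rTensor (ι →₀ D) (dsDelta ι ΔD)) (TensorProduct.map α (Finsupp.lsingle i) (ΔD d)))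
    simp only [comp_apply, LinearEquiv.coe_coe] at hpb
    rw [hpb] at hφ
    rw [← comp_apply (rTensor _ (dsDelta ι ΔD)) (TensorProduct.map _ _), rTensor_comp_map,
      ← comp_apply (rTensor _ _) (TensorProduct.map _ _), rTensor_comp_map] at hφ
    rw [← comp_assoc α (dsDelta ι ΔD)
        ((TensorProduct.lid K (ι →₀ D)).toLinearMap
          ∘ₗ rTensor (ι →₀ D) (εD ∘ₗ Finsupp.lapply i)),
      comp_assoc (dsDelta ι ΔD) (rTensor (ι →₀ D) (εD ∘ₗ Finsupp.lapply i))
        (TensorProduct.lid K (ι →₀ D)).toLinearMap,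
      g_eq ΔD εD hclD i,
      comp_assoc α (Finsupp.lapply i) (Finsupp.lsingle i),
      ← map_comp_rTensor, comp_apply, ← hcomp d] at hφ
    exact hφ
  -- conclude: every component of α is injective
  have hinj : ∀ (i : ι) (d : D), α d i = 0 → d = 0 := by
    intro i d h
    have := key i d
    rw [h, map_zero, map_zero, map_zero] at this
    exact Finsupp.single_eq_zero.mp this
  obtain ⟨d, hd⟩ := exists_ne (0 : D)
  have hmem : ∀ i : ι, i ∈ (α d).support := fun i =>
    Finsupp.mem_support_iff.mpr fun h => hd (hinj i d h)
  exact Finite.of_injective (fun i : ι => (⟨i, hmem i⟩ : {x // x ∈ (α d).support}))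
    fun a b hab => by simpa using congrArg Subtype.val hab
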